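/- Let G be a digraph (with connected underlying graph) equipped with an η-function θ. For ε ∈ {+,−}, the support of the first power of the transfer matrix satisfies U_θ^{(1,ε)} = U^ε, where U = U(G^±) is the Grover transfer matrix of the underlying graph. Moreover, if G is k-regular with k ≥ 3, then U_θ^{(1,+)} = k·S·K*K − S, where S = S(G^±) and K = K(G^±). -/

import Mathlib

open Matrix Polynomial

noncomputable section

variable {V : Type} [Fintype V] [DecidableEq V]

/-- The set of symmetric arcs of a simple graph `G`: ordered pairs of adjacent vertices. -/
abbrev GArc (G : SimpleGraph V) : Type := {p : V × V // G.Adj p.1 p.2}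

/-- The origin of an arc. -/
def arcO {G : SimpleGraph V} (a : GArc G) : V := a.1.1

/-- The terminus of an arc. -/
def arcT {G : SimpleGraph V} (a : GArc G) : V := a.1.2

/-- The inverse of an arc. -/
def arcInv {G : SimpleGraph V} (a : GArc G) : GArc G := ⟨(a.1.2, a.1.1), a.2.symm⟩

/-- The boundary matrix `K`, with `K_{v,a} = δ_{v,t(a)} / √(deg t(a))`. -/
def bdK (G : SimpleGraph V) [DecidableRel G.Adj] : Matrix V (GArc G) ℂ :=
  fun v a => if v = arcT a then ((1 / Real.sqrt (G.degree (arcT a)) : ℝ) : ℂ) else 0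

/-- The coin operator `C = 2K*K - I`. -/
def coinC (G : SimpleGraph V) [DecidableRel G.Adj] : Matrix (GArc G) (GArc G) ℂ :=
  (2 : ℂ) • ((bdK G)ᴴ * bdK G) - 1

/-- The shift operator `S`, with `S_{ab} = δ_{a,b⁻¹}`. -/
def shiftS (G : SimpleGraph V) : Matrix (GArc G) (GArc G) ℂ :=
  fun a b => if a = arcInv b then 1 else 0

/-- The perturbed shift `S_θ`, with `(S_θ)_{ab} = e^{iθ(b)} δ_{a,b⁻¹}`. -/
def shiftStheta (G : SimpleGraph V) (θ : GArc G → ℝ) : Matrix (GArc G) (GArc G) ℂ :=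
  fun a b => if a = arcInv b then Complex.exp ((θ b : ℂ) * Complex.I) else 0

/-- The Grover transfer matrix `U = SC`. -/
def groverU (G : SimpleGraph V) [DecidableRel G.Adj] : Matrix (GArc G) (GArc G) ℂ :=
  shiftS G * coinC G

/-- The transfer matrix `U_θ = S_θ C`. -/
def transferU (G : SimpleGraph V) [DecidableRel G.Adj] (θ : GArc G → ℝ) :
    Matrix (GArc G) (GArc G) ℂ :=
  shiftStheta G θ * coinC G

/-- The diagonal matrix `D_θ` with `(D_θ)_{ab} = e^{iθ(a)} δ_{ab}`. -/
def Dtheta (G : SimpleGraph V) (θ : GArc G → ℝ) : Matrix (GArc G) (GArc G) ℂ :=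
  Matrix.diagonal fun a => Complex.exp ((θ a : ℂ) * Complex.I)

/-- The positive support of a (real-valued) complex matrix. -/
def suppPos {α : Type} (M : Matrix α α ℂ) : Matrix α α ℂ :=
  fun a b => if 0 < (M a b).re then 1 else 0

/-- The negative support of a (real-valued) complex matrix. -/
def suppNeg {α : Type} (M : Matrix α α ℂ) : Matrix α α ℂ :=
  fun a b => if (M a b).re < 0 then 1 else 0

/-- The positive support of a real matrix. -/
def suppPosR {α : Type} (M : Matrix α α ℝ) : Matrix α α ℝ :=
  fun a b => if 0 < M a b then 1 else 0

/-- The negative support of a real matrix. -/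
def suppNegR {α : Type} (M : Matrix α α ℝ) : Matrix α α ℝ :=
  fun a b => if M a b < 0 then 1 else 0

/-- A digraph on `V`: an irreflexive (Boolean) arc relation. -/
structure Dgraph (V : Type) where
  adj : V → V → Bool
  loopless : ∀ v, adj v v = false

namespace Dgraph

/-- `(x,y)` is an arc of `D`. -/
def Adj (D : Dgraph V) (x y : V) : Prop := D.adj x y = true

instance (D : Dgraph V) : DecidableRel D.Adj := fun _ _ => by unfold Adj; infer_instance

/-- The underlying (undirected simple) graph `G^±`. -/
def underlying (D : Dgraph V) : SimpleGraph V where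
  Adj x y := D.Adj x y ∨ D.Adj y x
  symm := ⟨fun _ _ h => h.symm⟩
  loopless := ⟨fun v h => by
    rcases h with h | h <;> exact absurd h (by simp [Adj, D.loopless v])⟩

instance (D : Dgraph V) : DecidableRel D.underlying.Adj :=
  fun x y => inferInstanceAs (Decidable (D.Adj x y ∨ D.Adj y x))

/-- The transpose digraph `G⁻¹`. -/
def transpose (D : Dgraph V) : Dgraph V where
  adj x y := D.adj y x
  loopless := D.loopless

end Dgraph

/-- The `η`-function of a digraph `D`: `η` on `A∖A⁻¹`, `-η` on `A⁻¹∖A`, `0` on digons. -/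
def etaFun (D : Dgraph V) (η : ℝ) (a : GArc D.underlying) : ℝ :=
  if D.Adj (arcO a) (arcT a) then (if D.Adj (arcT a) (arcO a) then 0 else η) else -η

/-- The `η`-Hermitian adjacency matrix `H_η`. -/
def Heta (D : Dgraph V) (η : ℝ) : Matrix V V ℂ :=
  fun x y =>
    if D.Adj x y then (if D.Adj y x then 1 else Complex.exp ((η : ℂ) * Complex.I))
    else if D.Adj y x then Complex.exp (-(η : ℂ) * Complex.I) else 0

/-- The diagonal matrix `D^{-1/2}` of inverse square roots of degrees. -/
def degHalfInv (D : Dgraph V) : Matrix V V ℂ :=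
  Matrix.diagonal fun x => ((1 / Real.sqrt (D.underlying.degree x) : ℝ) : ℂ)

/-- The normalized `η`-Hermitian adjacency matrix `H̃_η = D^{-1/2} H_η D^{-1/2}`. -/
def normHeta (D : Dgraph V) (η : ℝ) : Matrix V V ℂ :=
  degHalfInv D * Heta D η * degHalfInv D

/-- The multiset of preimages of `μ` under `φ(z) = (z + z⁻¹)/2` on the unit circle:
the distinct roots of `z² - 2μz + 1`. -/
def phiInv (μ : ℂ) : Multiset ℂ :=
  ((X ^ 2 - Polynomial.C (2 * μ) * X + 1 : Polynomial ℂ).roots).dedup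

/-- A closed path in a graph: a nonempty chain of arcs returning to its start. -/
structure ClosedPath (G : SimpleGraph V) where
  arcs : List (GArc G)
  ne : arcs ≠ []
  chain : arcs.Chain' fun a b => arcT a = arcO b
  closed : arcT (arcs.getLast ne) = arcO (arcs.head ne)

/-- `ℐ(c) = Σ_j θ(a_j)` for a closed path `c`. -/
def pathSum {G : SimpleGraph V} (θ : GArc G → ℝ) (c : ClosedPath G) : ℝ :=
  (c.arcs.map θ).sum

/-- `x ∈ 2πℤ`. -/
def in2piZ (x : ℝ) : Prop := ∃ m : ℤ, x = 2 * Real.pi * m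

/-- `x ∈ 2π(ℤ + 1/2)`. -/
def in2piZhalf (x : ℝ) : Prop := ∃ m : ℤ, x = 2 * Real.pi * (m + 1 / 2)

/-- The matrix `F_t` with `(F_t)_{x,a} = δ_{x,t(a)}`. -/
def Ft (G : SimpleGraph V) : Matrix V (GArc G) ℂ := fun x a => if x = arcT a then 1 else 0

/-- The matrix `F_o` with `(F_o)_{x,a} = δ_{x,o(a)}`. -/
def Fo (G : SimpleGraph V) : Matrix V (GArc G) ℂ := fun x a => if x = arcO a then 1 else 0

/-- The 0/1 matrix `R` with `R_{ab} = 1` iff `m(a,b) = (t(b),o(a)) ∈ A(G) ∩ A(G)⁻¹`. -/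
def Rmat (D : Dgraph V) : Matrix (GArc D.underlying) (GArc D.underlying) ℂ :=
  fun a b => if D.Adj (arcT b) (arcO a) ∧ D.Adj (arcO a) (arcT b) then 1 else 0

/-- `U_θ^{(n,+)}`: the 0/1 matrix with `(a,b)` entry `1` iff `Re(D_θ U_θⁿ)_{ab} > 0`. -/
def suppPow (D : Dgraph V) (η : ℝ) (n : ℕ) :
    Matrix (GArc D.underlying) (GArc D.underlying) ℂ :=
  suppPos (Dtheta D.underlying (etaFun D η) * transferU D.underlying (etaFun D η) ^ n)

/-- `U_θ^{(n,−)}`: the 0/1 matrix with `(a,b)` entry `1` iff `Re(D_θ U_θⁿ)_{ab} < 0`. -/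
def suppPowNeg (D : Dgraph V) (η : ℝ) (n : ℕ) :
    Matrix (GArc D.underlying) (GArc D.underlying) ℂ :=
  suppNeg (Dtheta D.underlying (etaFun D η) * transferU D.underlying (etaFun D η) ^ n)

/-- The number of digons of a digraph. -/
def digonCount (D : Dgraph V) : ℕ :=
  (Finset.univ.filter fun p : V × V => D.Adj p.1 p.2 ∧ D.Adj p.2 p.1).card / 2

/-- The digraph `Y_{a,n-a}`: two complete (digon) blocks `[a]` and `[n]∖[a]`, with all
arcs from the first block to the second. -/
def Ydigraph (n a : ℕ) : Dgraph (Fin n) where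
  adj x y := decide ((x ≠ y) ∧
    ((x.val < a ∧ y.val < a) ∨ (a ≤ x.val ∧ a ≤ y.val) ∨ (x.val < a ∧ a ≤ y.val)))
  loopless := fun v => by simp

/-- The shift operator as a real matrix. -/
def shiftSR (G : SimpleGraph V) : Matrix (GArc G) (GArc G) ℝ :=
  fun a b => if a = arcInv b then 1 else 0

/-- The Grover transfer matrix as a real matrix, given by its entries
`U_{ab} = (2/deg t(b)) δ_{t(b),o(a)} − δ_{a⁻¹,b}`. -/
def groverEnt (G : SimpleGraph V) [DecidableRel G.Adj] : Matrix (GArc G) (GArc G) ℝ :=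
  fun a b => 2 / (G.degree (arcT b)) * (if arcT b = arcO a then 1 else 0)
    - (if arcInv a = b then 1 else 0)

end

/-! The phase `e^{iθ(b)}` that `S_θ` puts on an arc is cancelled by the phase `e^{iθ(b⁻¹)}` that
`D_θ` puts on its inverse, because an `η`-function is antisymmetric under arc reversal. Hence
`D_θ U_θ = D_θ S_θ C = S C = U` exactly, so all supports agree. In the `k`-regular case
`U_{ab} = (2/k) δ_{o(a),t(b)} − δ_{a,b⁻¹}`; for `k ≥ 2` the only entries with both terms,
those at `a = b⁻¹`, equal `2/k − 1 ≤ 0`, so `U⁺` is `δ_{o(a),t(b)} − δ_{a,b⁻¹} = k S K*K − S`. -/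

section Arcs

variable {V : Type} {G : SimpleGraph V}

@[simp]
lemma arcInv_arcInv (a : GArc G) : arcInv (arcInv a) = a := rfl

@[simp]
lemma arcO_arcInv (a : GArc G) : arcO (arcInv a) = arcT a := rfl

@[simp]
lemma arcT_arcInv (a : GArc G) : arcT (arcInv a) = arcO a := rfl

lemma eq_arcInv_iff {a b : GArc G} : a = arcInv b ↔ arcInv a = b := by
  constructor <;> rintro rfl <;> rfl

end Arcs

lemma etaFun_arcInv {V : Type} (D : Dgraph V) (η : ℝ) (a : GArc D.underlying) :
    etaFun D η (arcInv a) = -etaFun D η a := by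
  have ha : D.Adj (arcO a) (arcT a) ∨ D.Adj (arcT a) (arcO a) := a.2
  unfold etaFun
  rw [arcO_arcInv, arcT_arcInv]
  by_cases h₁ : D.Adj (arcO a) (arcT a) <;> by_cases h₂ : D.Adj (arcT a) (arcO a) <;>
    simp_all

section Transfer

variable {V : Type} [Fintype V] [DecidableEq V] (G : SimpleGraph V) [DecidableRel G.Adj]

lemma Dtheta_mul_shiftStheta {θ : GArc G → ℝ} (hθ : ∀ a, θ (arcInv a) = -θ a) :
    Dtheta G θ * shiftStheta G θ = shiftS G := by
  ext a b
  rw [Dtheta, diagonal_mul, shiftStheta, shiftS]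
  split_ifs with h
  · subst h
    rw [← Complex.exp_add, hθ, Complex.ofReal_neg, neg_mul, neg_add_cancel, Complex.exp_zero]
  · rw [mul_zero]

lemma Dtheta_mul_transferU {θ : GArc G → ℝ} (hθ : ∀ a, θ (arcInv a) = -θ a) :
    Dtheta G θ * transferU G θ = groverU G := by
  rw [transferU, ← Matrix.mul_assoc, Dtheta_mul_shiftStheta G hθ, groverU]

lemma shiftS_mul_apply (M : Matrix (GArc G) (GArc G) ℂ) (a b : GArc G) :
    (shiftS G * M) a b = M (arcInv a) b := by
  rw [mul_apply, Finset.sum_eq_single (arcInv a)]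
  · rw [shiftS, arcInv_arcInv, if_pos rfl, one_mul]
  · intro c _ hc
    rw [shiftS, if_neg (fun h => hc (eq_arcInv_iff.mp h).symm), zero_mul]
  · exact fun h => absurd (Finset.mem_univ _) h

lemma conjTranspose_bdK_mul_bdK_apply (a b : GArc G) :
    ((bdK G)ᴴ * bdK G) a b
      = if arcT a = arcT b then (((G.degree (arcT b) : ℝ)⁻¹ : ℝ) : ℂ) else 0 := by
  rw [mul_apply, Finset.sum_eq_single (arcT b)]
  · rw [conjTranspose_apply, bdK, bdK, if_pos rfl]
    by_cases h : arcT a = arcT b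
    · rw [if_pos h.symm, if_pos h, h, Complex.star_def, Complex.conj_ofReal, ← Complex.ofReal_mul,
        div_mul_div_comm, one_mul, Real.mul_self_sqrt (Nat.cast_nonneg _), one_div]
    · rw [if_neg (Ne.symm h), if_neg h, star_zero, zero_mul]
  · intro v _ hv
    rw [bdK, if_neg hv, mul_zero]
  · exact fun h => absurd (Finset.mem_univ _) h

lemma groverU_apply (a b : GArc G) :
    groverU G a b
      = (if arcO a = arcT b then ((2 * (G.degree (arcT b) : ℝ)⁻¹ : ℝ) : ℂ) else 0)
        - if a = arcInv b then 1 else 0 := by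
  rw [groverU, shiftS_mul_apply, coinC, Matrix.sub_apply, Matrix.smul_apply,
    conjTranspose_bdK_mul_bdK_apply, arcT_arcInv, one_apply]
  simp only [← eq_arcInv_iff]
  congr 1
  split_ifs <;> push_cast <;> ring

lemma suppPos_groverU_of_isRegularOfDegree {k : ℕ} (hk : 2 ≤ k) (hreg : G.IsRegularOfDegree k) :
    suppPos (groverU G) = (k : ℂ) • (shiftS G * (bdK G)ᴴ * bdK G) - shiftS G := by
  have hk₂ : (2 : ℝ) ≤ k := by exact_mod_cast hk
  have hk_mul_inv : (k : ℂ) * (((k : ℝ)⁻¹ : ℝ) : ℂ) = 1 := by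
    rw [← Complex.ofReal_natCast, ← Complex.ofReal_mul, mul_inv_cancel₀ (by positivity),
      Complex.ofReal_one]
  ext a b
  rw [Matrix.sub_apply, Matrix.smul_apply, Matrix.mul_assoc, shiftS_mul_apply,
    conjTranspose_bdK_mul_bdK_apply, arcT_arcInv, suppPos, groverU_apply, hreg, shiftS,
    smul_eq_mul]
  by_cases hab : a = arcInv b
  · have hre : ¬ 0 < 2 * (k : ℝ)⁻¹ - 1 := by
      rw [not_lt, sub_nonpos, ← div_eq_mul_inv, div_le_one (by positivity)]
      exact hk₂
    subst hab
    simp only [arcO_arcInv, if_true, Complex.sub_re, Complex.ofReal_re, Complex.one_re,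
      if_neg hre, hk_mul_inv, sub_self]
  · by_cases hoa : arcO a = arcT b
    · have hpos : 0 < 2 * (k : ℝ)⁻¹ := by positivity
      simp only [hoa, hab, if_true, if_false, sub_zero, Complex.ofReal_re, if_pos hpos, hk_mul_inv]
    · simp [hoa, hab]

end Transfer

theorem stmt10_general {V : Type} [Fintype V] [DecidableEq V] (η : ℝ) (D : Dgraph V)
    (k : ℕ) :
    suppPos (Dtheta D.underlying (etaFun D η) * transferU D.underlying (etaFun D η))
        = suppPos (groverU D.underlying) ∧
    suppNeg (Dtheta D.underlying (etaFun D η) * transferU D.underlying (etaFun D η))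
        = suppNeg (groverU D.underlying) ∧
    (3 ≤ k → (∀ v, D.underlying.degree v = k) →
      suppPos (Dtheta D.underlying (etaFun D η) * transferU D.underlying (etaFun D η))
        = (k : ℂ) • (shiftS D.underlying * (bdK D.underlying)ᴴ * bdK D.underlying)
            - shiftS D.underlying) := by
  have hU := Dtheta_mul_transferU D.underlying (etaFun_arcInv D η)
  rw [hU]
  exact ⟨rfl, rfl, fun hk hreg =>
    suppPos_groverU_of_isRegularOfDegree D.underlying (by omega) hreg⟩

/-- The supports of the first power of the transfer matrix coincide with the corresponding
supports of the Grover transfer matrix of the underlying graph; in the `k`-regular case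
(`k ≥ 3`), `U_θ^{(1,+)} = k·S·K*K − S`. -/
theorem stmt10 {V : Type} [Fintype V] [DecidableEq V] (η : ℝ) (D : Dgraph V)
    (hconn : D.underlying.Connected) (k : ℕ) :
    suppPos (Dtheta D.underlying (etaFun D η) * transferU D.underlying (etaFun D η))
        = suppPos (groverU D.underlying) ∧
    suppNeg (Dtheta D.underlying (etaFun D η) * transferU D.underlying (etaFun D η))
        = suppNeg (groverU D.underlying) ∧
    (3 ≤ k → (∀ v, D.underlying.degree v = k) →
      suppPos (Dtheta D.underlying (etaFun D η) * transferU D.underlying (etaFun D η))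
        = (k : ℂ) • (shiftS D.underlying * (bdK D.underlying)ᴴ * bdK D.underlying)
            - shiftS D.underlying) :=
  stmt10_general η D k
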